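/- Consider the bichromatic DAG G_t built from vector sets A, B ⊆ {0,1}^d: red vertex set A, blue vertex sets B_1,...,B_t (copies of B) and index sets I_1,...,I_t (copies of [d]); all edges A → I_1; matching edges v_{i,j} → v_{i+1,j} and b_i → b_{i+1} for 1 ≤ i ≤ t−1; edges a → v_{t,j} iff a[j] = 1 and v_{t,j} → b_1 iff b[j] = 1. If every pair a ∈ A, b ∈ B satisfies a·b ≠ 0 (some common 1-index), then every red vertex is within directed distance t+1 of every blue vertex, so the bichromatic min-diameter is at most t+1. -/
import Mathlib


/-- Length (number of edges) of a shortest directed path from `a` to `b`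
in the digraph with edge relation `E`; `⊤` if there is no path. -/
noncomputable def ddist {V : Type*} (E : V → V → Prop) (a b : V) : ℕ∞ :=
  sInf {n : ℕ∞ | ∃ l : List V, List.Chain E a l ∧
    (a :: l).getLast (List.cons_ne_nil a l) = b ∧ n = l.length}

/-- The bichromatic OV DAG G_t: red vertices A (type α), blue vertices the
copies B_1, …, B_t of B (type β, encoded \`(i, b)\` with \`i = 0\` meaning B_1)
and the index copies I_1, …, I_t (encoded \`(i, j)\`). Edges: all A → I_1,
matchings v_{i,j} → v_{i+1,j} and b_i → b_{i+1}, edges a → v_{t,j} iff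
a[j] = 1, and v_{t,j} → b_1 iff b[j] = 1. -/
def bovE (t d : ℕ) {α β : Type*} (vA : α → Fin d → Bool) (vB : β → Fin d → Bool) :
    (α ⊕ ((Fin t × β) ⊕ (Fin t × Fin d))) → (α ⊕ ((Fin t × β) ⊕ (Fin t × Fin d))) → Prop :=
  fun u v => match u, v with
  | Sum.inl a, Sum.inr (Sum.inr (i, j)) => i.1 = 0 ∨ (i.1 = t - 1 ∧ vA a j = true)
  | Sum.inr (Sum.inr (i, j)), Sum.inr (Sum.inr (i2, j2)) => j = j2 ∧ i.1 + 1 = i2.1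
  | Sum.inr (Sum.inl (i, b)), Sum.inr (Sum.inl (i2, b2)) => b = b2 ∧ i.1 + 1 = i2.1
  | Sum.inr (Sum.inr (i, j)), Sum.inr (Sum.inl (i2, b)) => i.1 = t - 1 ∧ i2.1 = 0 ∧ vB b j = true
  | _, _ => False

/-- NO case: if every red-blue vector pair shares a common 1-index, then every
red vertex is within directed distance t+1 of every blue vertex, so the
bichromatic min-diameter of G_t is at most t+1. -/
theorem stmt14 {α β : Type*} (t d : ℕ) (ht : 1 ≤ t)
    (vA : α → Fin d → Bool) (vB : β → Fin d → Bool)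
    (hcommon : ∀ (a : α) (b : β), ∃ j : Fin d, vA a j = true ∧ vB b j = true) :
    ∀ (a : α) (v : (Fin t × β) ⊕ (Fin t × Fin d)),
      ddist (bovE t d vA vB) (Sum.inl a) (Sum.inr v) ≤ ((t + 1 : ℕ) : ℕ∞) := by
  intro a v
  set E := bovE t d vA vB with hE
  have key : ∀ l : List (α ⊕ ((Fin t × β) ⊕ (Fin t × Fin d))),
      List.Chain E (Sum.inl a) l →
      (Sum.inl a :: l).getLast (List.cons_ne_nil _ _) = Sum.inr v →
      l.length ≤ t + 1 →
      ddist E (Sum.inl a) (Sum.inr v) ≤ ((t+1 : ℕ) : ℕ∞) := by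
    intro l h1 h2 h3
    refine le_trans (sInf_le ⟨l, h1, h2, rfl⟩) ?_
    exact_mod_cast h3
  have idxchain : ∀ (n k : ℕ) (h : k + n < t) (j : Fin d) (i : Fin t), i.1 = k + n →
      ∃ l, List.Chain E (Sum.inr (Sum.inr (⟨k, by omega⟩, j))) l ∧
        (Sum.inr (Sum.inr ((⟨k, by omega⟩ : Fin t), j)) :: l).getLast (List.cons_ne_nil _ _)
          = Sum.inr (Sum.inr (i, j)) ∧ l.length = n := by
    intro n
    induction n with
    | zero =>
      intro k h j i hi
      have hik : (⟨k, by omega⟩ : Fin t) = i := Fin.ext (by simpa using hi.symm)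
      exact ⟨[], List.Chain.nil, by rw [← hik]; rfl, rfl⟩
    | succ n ih =>
      intro k h j i hi
      obtain ⟨l, hc, hl, hn⟩ := ih (k+1) (by omega) j i (by omega)
      refine ⟨Sum.inr (Sum.inr ((⟨k+1, by omega⟩ : Fin t), j)) :: l, ?_, ?_, by simp [hn]⟩
      · exact List.Chain.cons ⟨rfl, rfl⟩ hc
      · rw [List.getLast_cons (List.cons_ne_nil _ _)]; exact hl
  have bchain : ∀ (n k : ℕ) (h : k + n < t) (b : β) (i : Fin t), i.1 = k + n →
      ∃ l, List.Chain E (Sum.inr (Sum.inl (⟨k, by omega⟩, b))) l ∧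
        (Sum.inr (Sum.inl ((⟨k, by omega⟩ : Fin t), b)) :: l).getLast (List.cons_ne_nil _ _)
          = Sum.inr (Sum.inl (i, b)) ∧ l.length = n := by
    intro n
    induction n with
    | zero =>
      intro k h b i hi
      have hik : (⟨k, by omega⟩ : Fin t) = i := Fin.ext (by simpa using hi.symm)
      exact ⟨[], List.Chain.nil, by rw [← hik]; rfl, rfl⟩
    | succ n ih =>
      intro k h b i hi
      obtain ⟨l, hc, hl, hn⟩ := ih (k+1) (by omega) b i (by omega)
      refine ⟨Sum.inr (Sum.inl ((⟨k+1, by omega⟩ : Fin t), b)) :: l, ?_, ?_, by simp [hn]⟩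
      · exact List.Chain.cons ⟨rfl, rfl⟩ hc
      · rw [List.getLast_cons (List.cons_ne_nil _ _)]; exact hl
  match v with
  | Sum.inr (i, j) =>
      obtain ⟨l, hc, hl, hn⟩ := idxchain i.1 0 (by omega) j i (by omega)
      refine key (Sum.inr (Sum.inr ((⟨0, by omega⟩ : Fin t), j)) :: l) ?_ ?_ ?_
      · exact List.Chain.cons (Or.inl rfl) hc
      · rw [List.getLast_cons (List.cons_ne_nil _ _)]; exact hl
      · simp only [List.length_cons, hn]; omega
  | Sum.inl (i, b) =>
      obtain ⟨j, hA, hB⟩ := hcommon a b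
      obtain ⟨l, hc, hl, hn⟩ := bchain i.1 0 (by omega) b i (by omega)
      refine key (Sum.inr (Sum.inr ((⟨t-1, by omega⟩ : Fin t), j)) ::
        Sum.inr (Sum.inl ((⟨0, by omega⟩ : Fin t), b)) :: l) ?_ ?_ ?_
      · exact List.Chain.cons (Or.inr ⟨rfl, hA⟩)
          (List.Chain.cons ⟨rfl, rfl, hB⟩ hc)
      · rw [List.getLast_cons (List.cons_ne_nil _ _),
            List.getLast_cons (List.cons_ne_nil _ _)]; exact hl
      · simp only [List.length_cons, hn]; omega
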